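/- Let σ ≥ 1 and δ with 1 ≤ δ ≤ σ and 3δ - 1 - σ ≥ 0. Let ρ₀ > 0 and ρ₀/4 ≤ ρ ≤ ρ₀, and define M_{ρ,β} = ρ^{|β|+1}(|β|+1)^{6+2σ}/((β₂!)^{σ-δ}(|β|!)^δ). Then there is a constant C > 0 such that for all β, γ ∈ ℤ₊² with γ ≤ β, γ₁ < β₁, and 1 ≤ |γ| ≤ ⌊|β|/2⌋, one has binom(β,γ) · M_{ρ,β}² / (M_{ρ,β̃} · M_{ρ,γ} · M_{ρ,β-γ+(-1,1)}) ≤ C/(|γ|+1)^6, where β̃ = β - (1,0) and β-γ+(-1,1) = (β₁-γ₁-1, β₂-γ₂+1). -/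
import Mathlib


/-- `M_{ρ,β} = ρ^{|β|+1} (|β|+1)^{6+2σ} / ((β₂!)^{σ-δ} (|β|!)^δ)` for `β ∈ ℤ₊²`. -/
noncomputable def Mr (σ δ ρ : ℝ) (β : ℕ × ℕ) : ℝ :=
  ρ ^ (β.1 + β.2 + 1) * (((β.1 + β.2 : ℕ) : ℝ) + 1) ^ (6 + 2 * σ) /
    ((Nat.factorial β.2 : ℝ) ^ (σ - δ) * (Nat.factorial (β.1 + β.2) : ℝ) ^ δ)

private lemma vand (m n i j : ℕ) : m.choose i * n.choose j ≤ (m + n).choose (i + j) := by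
  rw [Nat.add_choose_eq]
  exact Finset.single_le_sum (f := fun ij : ℕ × ℕ => m.choose ij.1 * n.choose ij.2)
    (fun _ _ => Nat.zero_le _) (Finset.HasAntidiagonal.mem_antidiagonal.mpr (rfl : (i, j).1 + (i, j).2 = i + j))

private lemma nat_le_choose (n : ℕ) : ∀ g : ℕ, 1 ≤ g → 2 * g ≤ n → n ≤ n.choose g := by
  intro g
  induction g with
  | zero => intro h _; exact absurd h (by norm_num)
  | succ g ih =>
    intro _ h2
    rcases Nat.eq_zero_or_pos g with rfl | hg
    · simp [Nat.choose_one_right]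
    · exact le_trans (ih hg (by omega)) (Nat.choose_le_succ_of_lt_half_left (by omega))

private lemma key (σ δ ρ : ℝ) (hσ : 1 ≤ σ) (hδ1 : 1 ≤ δ) (hδσ : δ ≤ σ)
    (hδ3 : 0 ≤ 3 * δ - 1 - σ) (hρ : 0 < ρ) (a c k l : ℕ)
    (hg : 1 ≤ a + c) (hb : a + c ≤ k + l + 1) :
    (Nat.choose (a + k + 1) a : ℝ) * (Nat.choose (c + l) c : ℝ) *
        (Mr σ δ ρ (a + k + 1, c + l)) ^ 2 /
      (Mr σ δ ρ (a + k, c + l) * Mr σ δ ρ (a, c) * Mr σ δ ρ (k, l + 1)) ≤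
    (2:ℝ) ^ (11 + 4 * σ + 2 * δ) / (((a + c : ℕ) : ℝ) + 1) ^ 6 := by
  have hsd : (0:ℝ) ≤ σ - δ := by linarith
  have hMr : ∀ p : ℕ × ℕ, 0 < Mr σ δ ρ p := by
    intro p; unfold Mr; positivity
  rw [div_le_div_iff₀ (mul_pos (mul_pos (hMr _) (hMr _)) (hMr _)) (by positivity)]
  simp only [Mr]
  set AR : ℝ := ((a + k + 1 + (c + l) : ℕ) : ℝ) with hAR
  set A1R : ℝ := ((a + k + (c + l) : ℕ) : ℝ) with hA1R
  set gR : ℝ := ((a + c : ℕ) : ℝ) with hgR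
  set mR : ℝ := ((k + (l + 1) : ℕ) : ℝ) with hmR
  set F2 : ℝ := ((Nat.factorial (c + l) : ℕ) : ℝ) with hF2
  set FA : ℝ := ((Nat.factorial (a + k + 1 + (c + l)) : ℕ) : ℝ) with hFA
  set FA1 : ℝ := ((Nat.factorial (a + k + (c + l)) : ℕ) : ℝ) with hFA1
  set Fg : ℝ := ((Nat.factorial (a + c) : ℕ) : ℝ) with hFg
  set Fm : ℝ := ((Nat.factorial (k + (l + 1)) : ℕ) : ℝ) with hFm
  set Fc : ℝ := ((Nat.factorial c : ℕ) : ℝ) with hFc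
  set Fl1 : ℝ := ((Nat.factorial (l + 1) : ℕ) : ℝ) with hFl1
  set ch1 : ℝ := ((Nat.choose (a + k + 1) a : ℕ) : ℝ) with hch1
  set ch2 : ℝ := ((Nat.choose (c + l) c : ℕ) : ℝ) with hch2
  set cb : ℝ := ((Nat.choose (a + k + 1 + (c + l)) (a + c) : ℕ) : ℝ) with hcb
  -- basic positivity facts
  have hF2p : (0:ℝ) < F2 := by rw [hF2]; exact_mod_cast (c+l).factorial_pos
  have hFAp : (0:ℝ) < FA := by rw [hFA]; exact_mod_cast (a+k+1+(c+l)).factorial_pos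
  have hFA1p : (0:ℝ) < FA1 := by rw [hFA1]; exact_mod_cast (a+k+(c+l)).factorial_pos
  have hFgp : (0:ℝ) < Fg := by rw [hFg]; exact_mod_cast (a+c).factorial_pos
  have hFmp : (0:ℝ) < Fm := by rw [hFm]; exact_mod_cast (k+(l+1)).factorial_pos
  have hFcp : (0:ℝ) < Fc := by rw [hFc]; exact_mod_cast c.factorial_pos
  have hFl1p : (0:ℝ) < Fl1 := by rw [hFl1]; exact_mod_cast (l+1).factorial_pos
  have hch1p : (0:ℝ) ≤ ch1 := by rw [hch1]; positivity
  have hch2p : (0:ℝ) ≤ ch2 := by rw [hch2]; positivity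
  have hcbp : (0:ℝ) < cb := by
    rw [hcb]; exact_mod_cast Nat.choose_pos (show a + c ≤ a + k + 1 + (c + l) by omega)
  have hApos : (0:ℝ) < AR := by
    rw [hAR]; exact_mod_cast (show 0 < a + k + 1 + (c + l) by omega)
  have hA1R1 : (1:ℝ) ≤ AR := by
    rw [hAR]; exact_mod_cast (show 1 ≤ a + k + 1 + (c + l) by omega)
  have hgR0 : (0:ℝ) ≤ gR := by rw [hgR]; positivity
  have hmR0 : (0:ℝ) ≤ mR := by rw [hmR]; positivity
  have hg1 : (1:ℝ) ≤ gR + 1 := by linarith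
  have hAR1 : (1:ℝ) ≤ AR + 1 := by linarith
  have hARp : (0:ℝ) < AR + 1 := by linarith
  have hhalfA : (AR + 1) / 2 ≤ AR := by linarith
  have hhalfm : (AR + 1) / 2 ≤ mR + 1 := by
    have h1 : (a + k + 1 + (c + l)) + 1 ≤ 2 * ((k + (l + 1)) + 1) := by omega
    have h2 : ((a + k + 1 + (c + l) : ℕ) : ℝ) + 1 ≤ 2 * (((k + (l + 1) : ℕ) : ℝ) + 1) := by
      exact_mod_cast h1
    rw [hAR, hmR]; linarith
  -- arithmetic identities
  have hρeq : ρ ^ (a + k + 1 + (c + l) + 1) * ρ ^ (a + k + 1 + (c + l) + 1)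
      = ρ ^ (a + k + (c + l) + 1) * ρ ^ (a + c + 1) * ρ ^ (k + (l + 1) + 1) := by
    rw [← pow_add, ← pow_add, ← pow_add]; congr 1; omega
  have hFAeq1 : FA = AR * FA1 := by
    rw [hFA, hFA1, hAR, show a + k + 1 + (c + l) = (a + k + (c + l)) + 1 from by omega,
      Nat.factorial_succ]
    push_cast; ring
  have hFAeq2 : FA = cb * Fg * Fm := by
    have h := Nat.choose_mul_factorial_mul_factorial
      (show a + c ≤ a + k + 1 + (c + l) by omega)
    rw [show a + k + 1 + (c + l) - (a + c) = k + (l + 1) from by omega] at h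
    rw [hFA, hcb, hFg, hFm]
    exact_mod_cast h.symm
  have hA2 : FA ^ δ * FA ^ δ = AR ^ δ * FA1 ^ δ * (cb ^ δ * Fg ^ δ * Fm ^ δ) := by
    nth_rewrite 1 [hFAeq1]
    nth_rewrite 1 [hFAeq2]
    rw [Real.mul_rpow (by positivity) (by positivity),
      Real.mul_rpow (by positivity) (by positivity),
      Real.mul_rpow (by positivity) (by positivity)]
  have eA : A1R + 1 = AR := by rw [hAR, hA1R]; push_cast; ring
  -- the binomial bound
  have hch : ch1 * ch2 ≤ cb := by
    rw [hch1, hch2, hcb]; exact_mod_cast vand (a + k + 1) (c + l) a c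
  have hcbA : AR ≤ cb := by
    rw [hAR, hcb]
    exact_mod_cast nat_le_choose (a + k + 1 + (c + l)) (a + c) hg (by omega)
  -- the factorial bound
  have hfacnat : Nat.factorial c * Nat.factorial (l + 1) ≤ Nat.factorial (c + (l + 1)) :=
    Nat.le_of_dvd (Nat.factorial_pos _) (Nat.factorial_mul_factorial_dvd_factorial_add c (l + 1))
  have hfac : Fc ^ (σ - δ) * Fl1 ^ (σ - δ) ≤ (AR + 1) ^ (σ - δ) * F2 ^ (σ - δ) := by
    calc Fc ^ (σ - δ) * Fl1 ^ (σ - δ)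
        = ((Nat.factorial c * Nat.factorial (l + 1) : ℕ) : ℝ) ^ (σ - δ) := by
          rw [Nat.cast_mul, Real.mul_rpow (by positivity) (by positivity), hFc, hFl1]
      _ ≤ ((Nat.factorial (c + (l + 1)) : ℕ) : ℝ) ^ (σ - δ) :=
          Real.rpow_le_rpow (by positivity) (by exact_mod_cast hfacnat) hsd
      _ = (((c + l : ℕ) : ℝ) + 1) ^ (σ - δ) * F2 ^ (σ - δ) := by
          rw [show c + (l + 1) = (c + l) + 1 from by omega, Nat.factorial_succ,
            Nat.cast_mul, Nat.cast_add_one,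
            Real.mul_rpow (by positivity) (by positivity), hF2]
      _ ≤ (AR + 1) ^ (σ - δ) * F2 ^ (σ - δ) := by
          apply mul_le_mul_of_nonneg_right _ (by positivity)
          apply Real.rpow_le_rpow (by positivity) _ hsd
          have h3 : ((c + l : ℕ) : ℝ) ≤ ((a + k + 1 + (c + l) : ℕ) : ℝ) := by
            exact_mod_cast (show c + l ≤ a + k + 1 + (c + l) by omega)
          rw [hAR]; linarith
  -- rpow combination identities
  have key1 : (AR + 1) ^ (6 + 2 * σ) * (AR + 1) ^ (6 + 2 * σ) * (AR + 1) ^ (σ - δ)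
      = (AR + 1) ^ (12 + 5 * σ - δ) := by
    rw [← Real.rpow_add hARp, ← Real.rpow_add hARp]; congr 1; ring
  have key2 : AR ^ (6 + 2 * σ) * AR ^ δ * AR ^ (δ - 1) = AR ^ (5 + 2 * σ + 2 * δ) := by
    rw [← Real.rpow_add hApos, ← Real.rpow_add hApos]; congr 1; ring
  have key3 : ((AR + 1) / 2) ^ (5 + 2 * σ + 2 * δ) * ((AR + 1) / 2) ^ (6 + 2 * σ)
      = ((AR + 1) / 2) ^ (11 + 4 * σ + 2 * δ) := by
    rw [← Real.rpow_add (by linarith)]; congr 1; ring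
  have key4 : (2:ℝ) ^ (11 + 4 * σ + 2 * δ) * ((AR + 1) / 2) ^ (11 + 4 * σ + 2 * δ)
      = (AR + 1) ^ (11 + 4 * σ + 2 * δ) := by
    rw [← Real.mul_rpow (by norm_num) (by linarith)]; congr 1; ring
  have keyg : (gR + 1) ^ (6:ℕ) ≤ (gR + 1) ^ (6 + 2 * σ) := by
    calc (gR + 1) ^ (6:ℕ) = (gR + 1) ^ ((6:ℕ):ℝ) := (Real.rpow_natCast _ 6).symm
      _ ≤ (gR + 1) ^ (6 + 2 * σ) :=
          Real.rpow_le_rpow_of_exponent_le hg1 (by push_cast; linarith)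
  have hcbd : cb ^ (δ - 1) * cb = cb ^ δ := by
    nth_rewrite 2 [← Real.rpow_one cb]
    rw [← Real.rpow_add hcbp]; congr 1; ring
  -- the central numeric inequality
  have hnum : (gR + 1) ^ (6:ℕ) * ((AR + 1) ^ (6 + 2 * σ) * (AR + 1) ^ (6 + 2 * σ)) * (AR + 1) ^ (σ - δ)
      ≤ (gR + 1) ^ (6 + 2 * σ) *
        ((2:ℝ) ^ (11 + 4 * σ + 2 * δ) * (AR ^ (6 + 2 * σ) * AR ^ δ * AR ^ (δ - 1)) * (mR + 1) ^ (6 + 2 * σ)) := by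
    calc (gR + 1) ^ (6:ℕ) * ((AR + 1) ^ (6 + 2 * σ) * (AR + 1) ^ (6 + 2 * σ)) * (AR + 1) ^ (σ - δ)
        = (gR + 1) ^ (6:ℕ) * ((AR + 1) ^ (6 + 2 * σ) * (AR + 1) ^ (6 + 2 * σ) * (AR + 1) ^ (σ - δ)) := by
          ring
      _ = (gR + 1) ^ (6:ℕ) * (AR + 1) ^ (12 + 5 * σ - δ) := by rw [key1]
      _ ≤ (gR + 1) ^ (6 + 2 * σ) * (AR + 1) ^ (11 + 4 * σ + 2 * δ) := by
          apply mul_le_mul keyg (Real.rpow_le_rpow_of_exponent_le hAR1 (by linarith))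
            (by positivity) (by positivity)
      _ = (gR + 1) ^ (6 + 2 * σ) *
            ((2:ℝ) ^ (11 + 4 * σ + 2 * δ) * (((AR + 1) / 2) ^ (5 + 2 * σ + 2 * δ) * ((AR + 1) / 2) ^ (6 + 2 * σ))) := by
          rw [key3, key4]
      _ ≤ (gR + 1) ^ (6 + 2 * σ) *
            ((2:ℝ) ^ (11 + 4 * σ + 2 * δ) * (AR ^ (5 + 2 * σ + 2 * δ) * (mR + 1) ^ (6 + 2 * σ))) := by
          apply mul_le_mul_of_nonneg_left _ (by positivity)
          apply mul_le_mul_of_nonneg_left _ (by positivity)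
          exact mul_le_mul (Real.rpow_le_rpow (by positivity) hhalfA (by linarith))
            (Real.rpow_le_rpow (by positivity) hhalfm (by linarith))
            (by positivity) (by positivity)
      _ = (gR + 1) ^ (6 + 2 * σ) *
            ((2:ℝ) ^ (11 + 4 * σ + 2 * δ) * (AR ^ (6 + 2 * σ) * AR ^ δ * AR ^ (δ - 1)) * (mR + 1) ^ (6 + 2 * σ)) := by
          rw [← key2]; ring
  -- core inequality
  have core : ch1 * ch2 * (gR + 1) ^ (6:ℕ) * ((AR + 1) ^ (6 + 2 * σ) * (AR + 1) ^ (6 + 2 * σ)) *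
        Fc ^ (σ - δ) * Fl1 ^ (σ - δ)
      ≤ (2:ℝ) ^ (11 + 4 * σ + 2 * δ) * AR ^ (6 + 2 * σ) * (gR + 1) ^ (6 + 2 * σ) *
        (mR + 1) ^ (6 + 2 * σ) * F2 ^ (σ - δ) * AR ^ δ * cb ^ δ := by
    calc ch1 * ch2 * (gR + 1) ^ (6:ℕ) * ((AR + 1) ^ (6 + 2 * σ) * (AR + 1) ^ (6 + 2 * σ)) *
          Fc ^ (σ - δ) * Fl1 ^ (σ - δ)
        = ch1 * ch2 * ((gR + 1) ^ (6:ℕ) * ((AR + 1) ^ (6 + 2 * σ) * (AR + 1) ^ (6 + 2 * σ))) *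
          (Fc ^ (σ - δ) * Fl1 ^ (σ - δ)) := by ring
      _ ≤ cb * ((gR + 1) ^ (6:ℕ) * ((AR + 1) ^ (6 + 2 * σ) * (AR + 1) ^ (6 + 2 * σ))) *
          ((AR + 1) ^ (σ - δ) * F2 ^ (σ - δ)) := by
          apply mul_le_mul (mul_le_mul_of_nonneg_right hch (by positivity)) hfac
            (by positivity) (by positivity)
      _ = cb * F2 ^ (σ - δ) *
          ((gR + 1) ^ (6:ℕ) * ((AR + 1) ^ (6 + 2 * σ) * (AR + 1) ^ (6 + 2 * σ)) * (AR + 1) ^ (σ - δ)) := by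
          ring
      _ ≤ cb * F2 ^ (σ - δ) *
          ((gR + 1) ^ (6 + 2 * σ) *
            ((2:ℝ) ^ (11 + 4 * σ + 2 * δ) * (AR ^ (6 + 2 * σ) * AR ^ δ * AR ^ (δ - 1)) * (mR + 1) ^ (6 + 2 * σ))) := by
          apply mul_le_mul_of_nonneg_left hnum (by positivity)
      _ = (2:ℝ) ^ (11 + 4 * σ + 2 * δ) * AR ^ (6 + 2 * σ) * (gR + 1) ^ (6 + 2 * σ) *
          (mR + 1) ^ (6 + 2 * σ) * F2 ^ (σ - δ) * AR ^ δ * (AR ^ (δ - 1) * cb) := by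
          ring
      _ ≤ (2:ℝ) ^ (11 + 4 * σ + 2 * δ) * AR ^ (6 + 2 * σ) * (gR + 1) ^ (6 + 2 * σ) *
          (mR + 1) ^ (6 + 2 * σ) * F2 ^ (σ - δ) * AR ^ δ * (cb ^ (δ - 1) * cb) := by
          apply mul_le_mul_of_nonneg_left
            (mul_le_mul_of_nonneg_right (Real.rpow_le_rpow (by positivity) hcbA (by linarith))
              (by positivity)) (by positivity)
      _ = (2:ℝ) ^ (11 + 4 * σ + 2 * δ) * AR ^ (6 + 2 * σ) * (gR + 1) ^ (6 + 2 * σ) *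
          (mR + 1) ^ (6 + 2 * σ) * F2 ^ (σ - δ) * AR ^ δ * cb ^ δ := by rw [hcbd]
  -- assemble
  calc ch1 * ch2 * (ρ ^ (a + k + 1 + (c + l) + 1) * (AR + 1) ^ (6 + 2 * σ) /
          (F2 ^ (σ - δ) * FA ^ δ)) ^ 2 * (gR + 1) ^ 6
      = (ch1 * ch2 * (ρ ^ (a + k + 1 + (c + l) + 1) * ρ ^ (a + k + 1 + (c + l) + 1)) *
          ((AR + 1) ^ (6 + 2 * σ) * (AR + 1) ^ (6 + 2 * σ)) * (gR + 1) ^ 6) /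
        ((F2 ^ (σ - δ) * F2 ^ (σ - δ)) * (FA ^ δ * FA ^ δ)) := by ring
    _ ≤ ((2:ℝ) ^ (11 + 4 * σ + 2 * δ) *
          (ρ ^ (a + k + (c + l) + 1) * (A1R + 1) ^ (6 + 2 * σ)) *
          (ρ ^ (a + c + 1) * (gR + 1) ^ (6 + 2 * σ)) *
          (ρ ^ (k + (l + 1) + 1) * (mR + 1) ^ (6 + 2 * σ))) /
        ((F2 ^ (σ - δ) * FA1 ^ δ) * (Fc ^ (σ - δ) * Fg ^ δ) * (Fl1 ^ (σ - δ) * Fm ^ δ)) := by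
        rw [div_le_div_iff₀ (by positivity) (by positivity)]
        calc ch1 * ch2 * (ρ ^ (a + k + 1 + (c + l) + 1) * ρ ^ (a + k + 1 + (c + l) + 1)) *
              ((AR + 1) ^ (6 + 2 * σ) * (AR + 1) ^ (6 + 2 * σ)) * (gR + 1) ^ 6 *
              ((F2 ^ (σ - δ) * FA1 ^ δ) * (Fc ^ (σ - δ) * Fg ^ δ) * (Fl1 ^ (σ - δ) * Fm ^ δ))
            = (ch1 * ch2 * (gR + 1) ^ (6:ℕ) *
                ((AR + 1) ^ (6 + 2 * σ) * (AR + 1) ^ (6 + 2 * σ)) * Fc ^ (σ - δ) * Fl1 ^ (σ - δ)) *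
              ((ρ ^ (a + k + (c + l) + 1) * ρ ^ (a + c + 1) * ρ ^ (k + (l + 1) + 1)) *
                (F2 ^ (σ - δ) * FA1 ^ δ * Fg ^ δ * Fm ^ δ)) := by rw [hρeq]; ring
          _ ≤ ((2:ℝ) ^ (11 + 4 * σ + 2 * δ) * AR ^ (6 + 2 * σ) * (gR + 1) ^ (6 + 2 * σ) *
                (mR + 1) ^ (6 + 2 * σ) * F2 ^ (σ - δ) * AR ^ δ * cb ^ δ) *
              ((ρ ^ (a + k + (c + l) + 1) * ρ ^ (a + c + 1) * ρ ^ (k + (l + 1) + 1)) *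
                (F2 ^ (σ - δ) * FA1 ^ δ * Fg ^ δ * Fm ^ δ)) := by
              exact mul_le_mul_of_nonneg_right core (by positivity)
          _ = (2:ℝ) ^ (11 + 4 * σ + 2 * δ) *
                (ρ ^ (a + k + (c + l) + 1) * (A1R + 1) ^ (6 + 2 * σ)) *
                (ρ ^ (a + c + 1) * (gR + 1) ^ (6 + 2 * σ)) *
                (ρ ^ (k + (l + 1) + 1) * (mR + 1) ^ (6 + 2 * σ)) *
              ((F2 ^ (σ - δ) * F2 ^ (σ - δ)) * (FA ^ δ * FA ^ δ)) := by
              rw [eA, hA2]; ring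
    _ = 2 ^ (11 + 4 * σ + 2 * δ) *
          (ρ ^ (a + k + (c + l) + 1) * (A1R + 1) ^ (6 + 2 * σ) / (F2 ^ (σ - δ) * FA1 ^ δ) *
            (ρ ^ (a + c + 1) * (gR + 1) ^ (6 + 2 * σ) / (Fc ^ (σ - δ) * Fg ^ δ)) *
            (ρ ^ (k + (l + 1) + 1) * (mR + 1) ^ (6 + 2 * σ) / (Fl1 ^ (σ - δ) * Fm ^ δ))) := by
        ring

theorem binom_M_squared_bound_strict_first (σ δ ρ₀ : ℝ) (hσ : 1 ≤ σ)
    (hδ1 : 1 ≤ δ) (hδσ : δ ≤ σ) (hδ3 : 0 ≤ 3 * δ - 1 - σ) (hρ₀ : 0 < ρ₀) :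
    ∃ C > 0, ∀ ρ : ℝ, ρ₀ / 4 ≤ ρ → ρ ≤ ρ₀ →
      ∀ β γ : ℕ × ℕ, γ.1 < β.1 → γ.2 ≤ β.2 →
        1 ≤ γ.1 + γ.2 → γ.1 + γ.2 ≤ (β.1 + β.2) / 2 →
        (Nat.choose β.1 γ.1 : ℝ) * (Nat.choose β.2 γ.2 : ℝ) * (Mr σ δ ρ β) ^ 2 /
            (Mr σ δ ρ (β.1 - 1, β.2) * Mr σ δ ρ γ *
              Mr σ δ ρ (β.1 - γ.1 - 1, β.2 - γ.2 + 1)) ≤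
          C / (((γ.1 + γ.2 : ℕ) : ℝ) + 1) ^ 6 := by
  refine ⟨(2:ℝ) ^ (11 + 4 * σ + 2 * δ), Real.rpow_pos_of_pos two_pos _, ?_⟩
  intro ρ hρ1 hρ2 β γ h1 h2 h3 h4
  have hρ : 0 < ρ := lt_of_lt_of_le (by positivity) hρ1
  obtain ⟨B1, B2⟩ := β
  obtain ⟨a, c⟩ := γ
  simp only at h1 h2 h3 h4 ⊢
  obtain ⟨k, rfl⟩ : ∃ k, B1 = a + k + 1 := ⟨B1 - a - 1, by omega⟩
  obtain ⟨l, rfl⟩ : ∃ l, B2 = c + l := ⟨B2 - c, by omega⟩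
  rw [show a + k + 1 - 1 = a + k from by omega, show a + k + 1 - a - 1 = k from by omega,
    show c + l - c + 1 = l + 1 from by omega]
  exact key σ δ ρ hσ hδ1 hδσ hδ3 hρ a c k l (by omega) (by omega)
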